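/- Let H be a real Hilbert space with closed subspaces H = V ⊕ W (orthogonal), and suppose a bounded symmetric bilinear form satisfies ⟨u,u⟩ ≤ λ‖u‖²_{L²} for u ∈ V and ⟨u,u⟩ ≥ Λ‖u‖²_{L²} for u ∈ W, where λ < Λ and ‖·‖_{L²} comes from a second inner product in which H embeds. If m is measurable with λ < m(x) < Λ a.e. and u ∈ H satisfies ⟨u,φ⟩ = ∫ m u φ for all φ ∈ H, then writing u = u₁ + u₂ (u₁ ∈ V, u₂ ∈ W) one obtains ‖u₁‖² ≥ λ‖u₁‖²_{L²} + ∫ m u₁u₂ and ‖u₂‖² ≤ Λ‖u₂‖²_{L²} + ∫ m u₁u₂, and if u ≠ 0 at least one inequality is strict, yielding the contradiction ‖u₁‖² − ‖u₂‖² > ‖u₁‖² − ‖u₂‖²; hence u = 0. -/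

import Mathlib

open MeasureTheory Filter ENNReal
open scoped RealInnerProductSpace

/-!
Testing the equation against `u₁` and `u₂` and using `⟪u₁, u₂⟫ = 0` gives
`‖u₁‖² = ∫ m (Tu₁)² + I` and `‖u₂‖² = ∫ m (Tu₂)² + I` with `I = ∫ m (Tu₁)(Tu₂)`.
Since `λ < m < Λ`, the weighted integrals satisfy `∫ m (Tu₁)² ≥ λ‖Tu₁‖²` and
`∫ m (Tu₂)² ≤ Λ‖Tu₂‖²`, which are the two inequalities. Combined with the bounds on
`V` and `W` they force equality in both, and equality in `λ‖f‖² ≤ ∫ m f²` with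
`λ < m` a.e. forces `f = 0`; injectivity of `T` then gives `u₁ = u₂ = 0`.
-/

namespace MeasureTheory.Lp

variable {α : Type*} [MeasurableSpace α] {μ : Measure α}

theorem norm_sq_eq_integral_mul_self (a : Lp ℝ 2 μ) :
    ‖a‖ ^ 2 = ∫ x, a x * a x ∂μ := by
  rw [← real_inner_self_eq_norm_sq, L2.inner_def]
  simp only [RCLike.inner_apply, conj_trivial]

theorem integrable_mul (a b : Lp ℝ 2 μ) : Integrable (fun x => a x * b x) μ := by
  simpa only [RCLike.inner_apply, conj_trivial] using L2.integrable_inner (𝕜 := ℝ) b a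

variable {m : α → ℝ} {c C : ℝ}

theorem integrable_weight_mul_mul (hm : AEStronglyMeasurable m μ)
    (hmC : ∀ᵐ x ∂μ, ‖m x‖ ≤ C) (a b : Lp ℝ 2 μ) :
    Integrable (fun x => m x * a x * b x) μ := by
  simpa only [mul_assoc] using (integrable_mul a b).bdd_mul hm hmC

theorem integral_weight_add_left {a b d : Lp ℝ 2 μ}
    (ha : Integrable (fun x => m x * a x * d x) μ)
    (hb : Integrable (fun x => m x * b x * d x) μ) :
    ∫ x, m x * (a + b : Lp ℝ 2 μ) x * d x ∂μ =
      (∫ x, m x * a x * d x ∂μ) + ∫ x, m x * b x * d x ∂μ := by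
  rw [← integral_add ha hb]
  refine integral_congr_ae ?_
  filter_upwards [coeFn_add a b] with x hx
  rw [hx, Pi.add_apply]
  ring

theorem integral_weight_comm (a b : Lp ℝ 2 μ) :
    ∫ x, m x * b x * a x ∂μ = ∫ x, m x * a x * b x ∂μ := by
  simp only [mul_right_comm]

theorem integral_sub_weight_mul_self {a : Lp ℝ 2 μ}
    (ha : Integrable (fun x => m x * a x * a x) μ) :
    ∫ x, (m x - c) * (a x * a x) ∂μ = (∫ x, m x * a x * a x ∂μ) - c * ‖a‖ ^ 2 := by
  rw [norm_sq_eq_integral_mul_self, ← integral_const_mul,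
    ← integral_sub ha ((integrable_mul a a).const_mul c)]
  congr 1 with x
  ring

theorem mul_norm_sq_le_integral_weight {a : Lp ℝ 2 μ}
    (ha : Integrable (fun x => m x * a x * a x) μ) (hc : ∀ᵐ x ∂μ, c ≤ m x) :
    c * ‖a‖ ^ 2 ≤ ∫ x, m x * a x * a x ∂μ := by
  have hnonneg : 0 ≤ ∫ x, (m x - c) * (a x * a x) ∂μ := by
    refine integral_nonneg_of_ae ?_
    filter_upwards [hc] with x hx
    exact mul_nonneg (sub_nonneg.2 hx) (mul_self_nonneg _)
  rw [integral_sub_weight_mul_self ha] at hnonneg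
  linarith

theorem eq_zero_of_integral_weight_le {a : Lp ℝ 2 μ}
    (ha : Integrable (fun x => m x * a x * a x) μ) (hc : ∀ᵐ x ∂μ, c < m x)
    (h : ∫ x, m x * a x * a x ∂μ ≤ c * ‖a‖ ^ 2) : a = 0 := by
  have hnonneg : 0 ≤ᵐ[μ] fun x => (m x - c) * (a x * a x) := by
    filter_upwards [hc] with x hx
    exact mul_nonneg (sub_nonneg.2 hx.le) (mul_self_nonneg _)
  have hint : Integrable (fun x => (m x - c) * (a x * a x)) μ := by
    simpa only [sub_mul, mul_assoc] using ha.sub' ((integrable_mul a a).const_mul c)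
  have hzero : ∫ x, (m x - c) * (a x * a x) ∂μ = 0 :=
    le_antisymm (by rw [integral_sub_weight_mul_self ha]; linarith)
      (integral_nonneg_of_ae hnonneg)
  rw [integral_eq_zero_iff_of_nonneg_ae hnonneg hint] at hzero
  rw [eq_zero_iff_ae_eq_zero]
  filter_upwards [hc, hzero] with x hx hx0
  simpa [(sub_pos.2 hx).ne'] using hx0

theorem integral_weight_le_mul_norm_sq {a : Lp ℝ 2 μ}
    (ha : Integrable (fun x => m x * a x * a x) μ) (hc : ∀ᵐ x ∂μ, m x ≤ c) :
    ∫ x, m x * a x * a x ∂μ ≤ c * ‖a‖ ^ 2 := by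
  have := mul_norm_sq_le_integral_weight (m := fun x => -m x) (c := -c) (a := a)
    (by simpa only [neg_mul] using ha.fun_neg) (by simpa only [neg_le_neg_iff] using hc)
  simp only [neg_mul, integral_neg] at this
  linarith

theorem eq_zero_of_mul_norm_sq_le_integral_weight {a : Lp ℝ 2 μ}
    (ha : Integrable (fun x => m x * a x * a x) μ) (hc : ∀ᵐ x ∂μ, m x < c)
    (h : c * ‖a‖ ^ 2 ≤ ∫ x, m x * a x * a x ∂μ) : a = 0 := by
  refine eq_zero_of_integral_weight_le (m := fun x => -m x) (c := -c)
    (by simpa only [neg_mul] using ha.fun_neg) (by simpa only [neg_lt_neg_iff] using hc) ?_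
  simp only [neg_mul, integral_neg]
  linarith

end MeasureTheory.Lp

theorem ae_norm_le_max_abs {α : Type*} [MeasurableSpace α] {μ : Measure α} {m : α → ℝ}
    {a b : ℝ} (h : ∀ᵐ x ∂μ, a < m x ∧ m x < b) : ∀ᵐ x ∂μ, ‖m x‖ ≤ max |a| |b| := by
  filter_upwards [h] with x hx
  rw [Real.norm_eq_abs, abs_le]
  constructor <;> linarith [le_max_left |a| |b|, le_max_right |a| |b|, neg_abs_le a, le_abs_self b]

theorem stmt17_general {α : Type*} [MeasurableSpace α] (μ : Measure α)
    {H : Type*} [NormedAddCommGroup H] [InnerProductSpace ℝ H]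
    (T : H →L[ℝ] Lp ℝ 2 μ) (hTinj : Function.Injective T)
    (V W : Submodule ℝ H)
    (horth : ∀ v ∈ V, ∀ w ∈ W, ⟪v, w⟫ = 0)
    (lam Lam : ℝ)
    (hV : ∀ v ∈ V, ⟪v, v⟫ ≤ lam * ‖T v‖^2)
    (hW : ∀ w ∈ W, Lam * ‖T w‖^2 ≤ ⟪w, w⟫)
    (m : α → ℝ) (hm : Measurable m)
    (hmb : ∀ᵐ x ∂μ, lam < m x ∧ m x < Lam)
    (u u₁ u₂ : H) (hu₁ : u₁ ∈ V) (hu₂ : u₂ ∈ W) (hsum : u = u₁ + u₂)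
    (heq : ∀ φ : H, ⟪u, φ⟫ =
      ∫ x, m x * (T u : α → ℝ) x * (T φ : α → ℝ) x ∂μ) :
    (lam * ‖T u₁‖^2 +
        ∫ x, m x * (T u₁ : α → ℝ) x * (T u₂ : α → ℝ) x ∂μ ≤ ‖u₁‖^2) ∧
    (‖u₂‖^2 ≤ Lam * ‖T u₂‖^2 +
        ∫ x, m x * (T u₁ : α → ℝ) x * (T u₂ : α → ℝ) x ∂μ) ∧
    u = 0 := by
  have hint := Lp.integrable_weight_mul_mul hm.aestronglyMeasurable (ae_norm_le_max_abs hmb)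
  have h12 : ⟪u₁, u₂⟫ = 0 := horth u₁ hu₁ u₂ hu₂
  have hTu : T u = T u₁ + T u₂ := by rw [hsum, map_add]
  have hinner₁ : ⟪u, u₁⟫ = ‖u₁‖ ^ 2 := by
    rw [hsum, inner_add_left, real_inner_comm u₁ u₂, h12, add_zero, real_inner_self_eq_norm_sq]
  have hinner₂ : ⟪u, u₂⟫ = ‖u₂‖ ^ 2 := by
    rw [hsum, inner_add_left, h12, zero_add, real_inner_self_eq_norm_sq]
  have E₁ : ‖u₁‖ ^ 2 = (∫ x, m x * T u₁ x * T u₁ x ∂μ) + ∫ x, m x * T u₁ x * T u₂ x ∂μ := by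
    rw [← hinner₁, heq, hTu, Lp.integral_weight_add_left (hint _ _) (hint _ _),
      Lp.integral_weight_comm (T u₁) (T u₂)]
  have E₂ : ‖u₂‖ ^ 2 = (∫ x, m x * T u₂ x * T u₂ x ∂μ) + ∫ x, m x * T u₁ x * T u₂ x ∂μ := by
    rw [← hinner₂, heq, hTu, Lp.integral_weight_add_left (hint _ _) (hint _ _), add_comm]
  have low₁ := Lp.mul_norm_sq_le_integral_weight (hint (T u₁) _) (hmb.mono fun _ h => h.1.le)
  have up₂ := Lp.integral_weight_le_mul_norm_sq (hint (T u₂) _) (hmb.mono fun _ h => h.2.le)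
  have hV₁ := real_inner_self_eq_norm_sq u₁ ▸ hV u₁ hu₁
  have hW₂ := real_inner_self_eq_norm_sq u₂ ▸ hW u₂ hu₂
  refine ⟨by linarith, by linarith, ?_⟩
  -- Subtracting `E₂` from `E₁` cancels the cross term, so the four bounds force equality in
  -- `low₁` and `up₂`.
  have hTu₁ : T u₁ = 0 :=
    Lp.eq_zero_of_integral_weight_le (hint _ _) (hmb.mono fun _ h => h.1) (by linarith)
  have hTu₂ : T u₂ = 0 :=
    Lp.eq_zero_of_mul_norm_sq_le_integral_weight (hint _ _) (hmb.mono fun _ h => h.2) (by linarith)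
  rw [hsum, (map_eq_zero_iff T hTinj).1 hTu₁, (map_eq_zero_iff T hTinj).1 hTu₂, add_zero]

/-- Abstract non-resonance lemma in a real Hilbert space `H = V ⊕ W`
(orthogonal sum), where the quadratic form (the inner product of `H`)
satisfies `⟪v,v⟫ ≤ λ‖v‖²_{L²}` on `V` and `⟪w,w⟫ ≥ Λ‖w‖²_{L²}` on `W` with
`λ < Λ`, the `L²` norm coming from the embedding `T : H → L²(μ)`.  If
`λ < m(x) < Λ` a.e. and `⟪u,φ⟫ = ∫ m (Tu)(Tφ)` for all `φ`, then, writing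
`u = u₁ + u₂` with `u₁ ∈ V`, `u₂ ∈ W`, one obtains the two inequalities
`‖u₁‖² ≥ λ‖u₁‖²_{L²} + ∫ m (Tu₁)(Tu₂)` and
`‖u₂‖² ≤ Λ‖u₂‖²_{L²} + ∫ m (Tu₁)(Tu₂)`, and `u = 0`. -/
theorem stmt17 {α : Type*} [MeasurableSpace α] (μ : Measure α)
    {H : Type*} [NormedAddCommGroup H] [InnerProductSpace ℝ H] [CompleteSpace H]
    (T : H →L[ℝ] Lp ℝ 2 μ) (hTinj : Function.Injective T)
    (V W : Submodule ℝ H)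
    (horth : ∀ v ∈ V, ∀ w ∈ W, ⟪v, w⟫ = 0)
    (hdecomp : ∀ u : H, ∃ v ∈ V, ∃ w ∈ W, u = v + w)
    (lam Lam : ℝ) (hlt : lam < Lam)
    (hV : ∀ v ∈ V, ⟪v, v⟫ ≤ lam * ‖T v‖^2)
    (hW : ∀ w ∈ W, Lam * ‖T w‖^2 ≤ ⟪w, w⟫)
    (m : α → ℝ) (hm : Measurable m)
    (hmb : ∀ᵐ x ∂μ, lam < m x ∧ m x < Lam)
    (u u₁ u₂ : H) (hu₁ : u₁ ∈ V) (hu₂ : u₂ ∈ W) (hsum : u = u₁ + u₂)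
    (heq : ∀ φ : H, ⟪u, φ⟫ =
      ∫ x, m x * (T u : α → ℝ) x * (T φ : α → ℝ) x ∂μ) :
    (lam * ‖T u₁‖^2 +
        ∫ x, m x * (T u₁ : α → ℝ) x * (T u₂ : α → ℝ) x ∂μ ≤ ‖u₁‖^2) ∧
    (‖u₂‖^2 ≤ Lam * ‖T u₂‖^2 +
        ∫ x, m x * (T u₁ : α → ℝ) x * (T u₂ : α → ℝ) x ∂μ) ∧
    u = 0 :=
  stmt17_general μ T hTinj V W horth lam Lam hV hW m hm hmb u u₁ u₂ hu₁ hu₂ hsum heq
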